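/- Let X be a complex m×n matrix with singular value decomposition X = U Σ Vᴴ, where Σ = diag(σ_1(X), …, σ_min(m,n)(X)) contains the singular values of X. For α ≥ 0, define S_α(X) := U diag(s_α(σ_1(X)), …, s_α(σ_min(m,n)(X))) Vᴴ, where s_α(x) = sgn(x)·max{|x|−α,0}. Then S_α(X) is a minimizer over all m×n matrices V of the functional V ↦ α‖V‖_* + (1/2)‖X − V‖_F², where ‖V‖_* denotes the nuclear norm of V (the sum of its singular values) and ‖·‖_F the Frobenius norm. -/

import Mathlib

open Matrix

/-- Soft thresholding with parameter `α`: `s_α(x) = sgn(x) · max(|x| - α, 0)`. -/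
noncomputable def softThresh (α x : ℝ) : ℝ := Real.sign x * max (|x| - α) 0

/-- The nuclear norm of a complex `m × n` matrix: the sum of its singular values, i.e. the sum
of the nonnegative square roots of the eigenvalues of `Vᴴ * V`. -/
noncomputable def nuclearNorm {m n : ℕ} (V : Matrix (Fin m) (Fin n) ℂ) : ℝ :=
  ∑ j : Fin n, Real.sqrt ((Matrix.isHermitian_conjTranspose_mul_self V).eigenvalues j)

/-- The squared Frobenius norm of a complex `m × n` matrix. -/
noncomputable def frobNormSq {m n : ℕ} (V : Matrix (Fin m) (Fin n) ℂ) : ℝ :=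
  ∑ i : Fin m, ∑ j : Fin n, ‖V i j‖ ^ 2

/-- The rectangular `m × n` "diagonal" matrix with diagonal entries `f 0, f 1, …`. -/
noncomputable def diagRect (m n : ℕ) (f : ℕ → ℝ) : Matrix (Fin m) (Fin n) ℂ :=
  fun i j => if (i : ℕ) = (j : ℕ) then (f (i : ℕ) : ℂ) else 0

/-!
Put `Y = U diag(s_α(f)) Vᴴ`. The residual `X - Y = U diag(f - s_α(f)) Vᴴ` has entries
`f k - s_α(f k)`, the clipping of `f k` to `[-α, α]`, and it is `α` times a subgradient of the
nuclear norm at `Y`: `⟪X - Y, Y⟫ = α ‖Y‖_*` since the clipped value is `α · sgn(s_α(f k))` wherever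
`s_α(f k) ≠ 0`, while `⟪X - Y, W⟫ ≤ α ‖W‖_*` for every `W` by trace duality. The latter says the
moduli of the diagonal entries of `Uᴴ W V` sum to at most `‖W‖_*`: write
`Uᴴ W V = (Uᴴ W R)(Rᴴ V)` with `R` unitary diagonalizing `Wᴴ W`, so that the `k`-th column of the
first factor has norm `σ_k(W)` and the rows of the second are unit vectors, and apply
Cauchy–Schwarz. Expanding `‖X - W‖² = ‖X - Y‖² + 2⟪X - Y, Y - W⟫ + ‖Y - W‖²` concludes.
-/

section SoftThresh

variable {α : ℝ}

theorem sub_softThresh (hα : 0 ≤ α) (x : ℝ) : x - softThresh α x = max (-α) (min x α) := by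
  unfold softThresh
  rcases lt_trichotomy x 0 with hx | rfl | hx
  · rw [Real.sign_of_neg hx, abs_of_neg hx]
    rcases le_total (-x - α) 0 with h | h
    · rw [max_eq_right h, min_eq_left (by linarith), max_eq_right (by linarith)]; ring
    · rw [max_eq_left h, min_eq_left (by linarith), max_eq_left (by linarith)]; ring
  · simp [hα]
  · rw [Real.sign_of_pos hx, abs_of_pos hx]
    rcases le_total (x - α) 0 with h | h
    · rw [max_eq_right h, min_eq_left (by linarith), max_eq_right (by linarith)]; ring
    · rw [max_eq_left h, min_eq_right (by linarith), max_eq_right (by linarith)]; ring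

theorem abs_sub_softThresh_le (hα : 0 ≤ α) (x : ℝ) : |x - softThresh α x| ≤ α := by
  rw [sub_softThresh hα, abs_le]
  exact ⟨le_max_left _ _, max_le (by linarith) (min_le_right _ _)⟩

theorem sub_softThresh_mul_softThresh (hα : 0 ≤ α) (x : ℝ) :
    (x - softThresh α x) * softThresh α x = α * |softThresh α x| := by
  have hs : softThresh α x = x - max (-α) (min x α) := by rw [← sub_softThresh hα]; ring
  rw [sub_softThresh hα, hs]
  rcases le_total x α with hxα | hαx
  · rcases le_total (-α) x with hx | hx
    · simp [min_eq_left hxα, max_eq_right hx]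
    · rw [min_eq_left hxα, max_eq_left hx, abs_of_nonpos (by linarith)]; ring
  · rw [min_eq_right hαx, max_eq_right (by linarith), abs_of_nonneg (by linarith)]

end SoftThresh

theorem sum_mul_embedding_le_sqrt_mul_sqrt {δ ι κ : Type*} [Fintype δ] [Fintype ι] [Fintype κ]
    (e₁ : δ ↪ ι) (e₂ : δ ↪ κ) (a : ι → ℝ) (b : κ → ℝ) :
    ∑ d, a (e₁ d) * b (e₂ d) ≤ √(∑ i, a i ^ 2) * √(∑ j, b j ^ 2) := by
  have h₁ : ∑ d, a (e₁ d) ^ 2 ≤ ∑ i, a i ^ 2 := by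
    rw [← Finset.sum_map Finset.univ e₁ fun i => a i ^ 2]
    exact Finset.sum_le_univ_sum_of_nonneg fun _ => sq_nonneg _
  have h₂ : ∑ d, b (e₂ d) ^ 2 ≤ ∑ j, b j ^ 2 := by
    rw [← Finset.sum_map Finset.univ e₂ fun j => b j ^ 2]
    exact Finset.sum_le_univ_sum_of_nonneg fun _ => sq_nonneg _
  exact (Real.sum_mul_le_sqrt_mul_sqrt _ _ _).trans <| mul_le_mul (Real.sqrt_le_sqrt h₁)
    (Real.sqrt_le_sqrt h₂) (Real.sqrt_nonneg _) (Real.sqrt_nonneg _)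

theorem sum_norm_sq_apply_eq_re_conjTranspose_mul_self_apply {𝕜 ι κ : Type*} [RCLike 𝕜]
    [Fintype ι] (B : Matrix ι κ 𝕜) (k : κ) :
    ∑ i, ‖B i k‖ ^ 2 = RCLike.re ((Bᴴ * B) k k) := by
  simp only [mul_apply, conjTranspose_apply, RCLike.star_def, RCLike.conj_mul, map_sum]
  exact Finset.sum_congr rfl fun i _ => by norm_cast

theorem sum_norm_sq_apply_eq_one_of_mem_unitaryGroup {𝕜 ι : Type*} [RCLike 𝕜] [Fintype ι]
    [DecidableEq ι] {C : Matrix ι ι 𝕜} (hC : C ∈ unitaryGroup ι 𝕜) (k : ι) :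
    ∑ j, ‖C k j‖ ^ 2 = 1 := by
  have hCC : C * Cᴴ = 1 := mem_unitaryGroup_iff.mp hC
  have h := sum_norm_sq_apply_eq_re_conjTranspose_mul_self_apply Cᴴ k
  rw [conjTranspose_conjTranspose, hCC] at h
  simpa [conjTranspose_apply] using h

theorem Matrix.IsHermitian.map_eigenvalues_eq_of_unitary_conj {𝕜 ι : Type*} [RCLike 𝕜]
    [Fintype ι] [DecidableEq ι] {A V : Matrix ι ι 𝕜} (hA : A.IsHermitian)
    (hV : V ∈ unitaryGroup ι 𝕜) (d : ι → ℝ)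
    (h : A = V * diagonal (fun i => (d i : 𝕜)) * Vᴴ) :
    Finset.univ.val.map hA.eigenvalues = Finset.univ.val.map d := by
  have hV' : Vᴴ * V = 1 := mem_unitaryGroup_iff'.mp hV
  have hcharpoly : A.charpoly = (diagonal fun i => (d i : 𝕜)).charpoly := by
    rw [h, charpoly_mul_comm, ← Matrix.mul_assoc, hV', Matrix.one_mul]
  have hroots := congrArg Polynomial.roots hcharpoly
  rw [hA.roots_charpoly_eq_eigenvalues, charpoly_diagonal, Polynomial.roots_prod _ _
    (by simp [Finset.prod_ne_zero_iff, Polynomial.X_sub_C_ne_zero])] at hroots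
  simp only [Polynomial.roots_X_sub_C, Multiset.bind_singleton, ← Multiset.map_map] at hroots
  exact Multiset.map_injective RCLike.ofReal_injective (hroots.trans (Multiset.map_map _ _ _).symm)

section Frobenius

variable {m n : ℕ}

noncomputable def frobInner (A B : Matrix (Fin m) (Fin n) ℂ) : ℝ :=
  ∑ i, ∑ j, (star (A i j) * B i j).re

theorem frobInner_eq_re_trace (A B : Matrix (Fin m) (Fin n) ℂ) :
    frobInner A B = (Aᴴ * B).trace.re := by
  simp only [frobInner, trace, Matrix.diag, mul_apply, conjTranspose_apply, Complex.re_sum]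
  exact Finset.sum_comm

theorem frobInner_sub_right (A B C : Matrix (Fin m) (Fin n) ℂ) :
    frobInner A (B - C) = frobInner A B - frobInner A C := by
  simp only [frobInner, Matrix.sub_apply, mul_sub, Complex.sub_re, Finset.sum_sub_distrib]

theorem frobNormSq_nonneg (A : Matrix (Fin m) (Fin n) ℂ) : 0 ≤ frobNormSq A :=
  Finset.sum_nonneg fun _ _ => Finset.sum_nonneg fun _ _ => sq_nonneg _

theorem frobNormSq_add (A B : Matrix (Fin m) (Fin n) ℂ) :
    frobNormSq (A + B) = frobNormSq A + 2 * frobInner A B + frobNormSq B := by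
  have h (p q : ℂ) : ‖p + q‖ ^ 2 = ‖p‖ ^ 2 + 2 * (star p * q).re + ‖q‖ ^ 2 := by
    simp only [Complex.sq_norm, Complex.normSq_apply, Complex.add_re, Complex.add_im,
      Complex.mul_re, Complex.star_def, Complex.conj_re, Complex.conj_im]
    ring
  simp only [frobNormSq, frobInner, Matrix.add_apply, h, Finset.sum_add_distrib, Finset.mul_sum]

theorem frobInner_mul_mul_conjTranspose_left (U : Matrix (Fin m) (Fin m) ℂ)
    (V : Matrix (Fin n) (Fin n) ℂ) (A W : Matrix (Fin m) (Fin n) ℂ) :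
    frobInner (U * A * Vᴴ) W = frobInner A (Uᴴ * W * V) := by
  rw [frobInner_eq_re_trace, frobInner_eq_re_trace, conjTranspose_mul, conjTranspose_mul,
    conjTranspose_conjTranspose, Matrix.mul_assoc, trace_mul_comm]
  simp only [Matrix.mul_assoc]

theorem frobInner_unitary_conj {U : Matrix (Fin m) (Fin m) ℂ} {V : Matrix (Fin n) (Fin n) ℂ}
    (hU : U ∈ unitaryGroup (Fin m) ℂ) (hV : V ∈ unitaryGroup (Fin n) ℂ)
    (A B : Matrix (Fin m) (Fin n) ℂ) :
    frobInner (U * A * Vᴴ) (U * B * Vᴴ) = frobInner A B := by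
  have hU' : Uᴴ * U = 1 := mem_unitaryGroup_iff'.mp hU
  have hV' : Vᴴ * V = 1 := mem_unitaryGroup_iff'.mp hV
  rw [frobInner_mul_mul_conjTranspose_left]
  congr 1
  calc Uᴴ * (U * B * Vᴴ) * V = (Uᴴ * U) * B * (Vᴴ * V) := by simp only [Matrix.mul_assoc]
    _ = B := by rw [hU', hV', Matrix.one_mul, Matrix.mul_one]

end Frobenius

section RectangularDiagonal

variable {m n : ℕ}

def rectDiag {R : Type*} (A : Matrix (Fin m) (Fin n) R) (k : Fin (min m n)) : R :=
  A (Fin.castLE (min_le_left m n) k) (Fin.castLE (min_le_right m n) k)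

theorem sum_sum_ite_val_eq_sum_rectDiag {R : Type*} [AddCommMonoid R]
    (A : Matrix (Fin m) (Fin n) R) :
    ∑ i : Fin m, ∑ j : Fin n, (if (i : ℕ) = j then A i j else 0) = ∑ k, rectDiag A k := by
  rw [← Fintype.sum_prod_type']
  symm
  refine Fintype.sum_of_injective
    (fun k => (Fin.castLE (min_le_left m n) k, Fin.castLE (min_le_right m n) k)) ?_ _ _ ?_
    fun k => by simp [rectDiag]
  · exact fun k l h => Fin.castLE_injective (min_le_left m n) (Prod.ext_iff.mp h).1
  · rintro ⟨i, j⟩ hij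
    refine if_neg fun (h : (i : ℕ) = j) => hij ⟨⟨i, lt_min i.isLt (h ▸ j.isLt)⟩, ?_⟩
    ext
    exacts [rfl, h]

theorem sum_ite_val_lt_eq_sum_fin_min {M : Type*} [AddCommMonoid M] (φ : ℕ → M) :
    ∑ j : Fin n, (if (j : ℕ) < m then φ j else 0) = ∑ k : Fin (min m n), φ k := by
  symm
  refine Fintype.sum_of_injective (Fin.castLE (min_le_right m n)) (Fin.castLE_injective _) _ _
    ?_ fun k => by simp [(lt_min_iff.mp k.isLt).1]
  intro j hj
  exact if_neg fun h => hj ⟨⟨j, lt_min h j.isLt⟩, rfl⟩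

theorem frobInner_diagRect_left (g : ℕ → ℝ) (M : Matrix (Fin m) (Fin n) ℂ) :
    frobInner (diagRect m n g) M = ∑ k : Fin (min m n), g k * (rectDiag M k).re := by
  refine Eq.trans (Finset.sum_congr rfl fun i _ => Finset.sum_congr rfl fun j _ => ?_)
    (sum_sum_ite_val_eq_sum_rectDiag fun i j => g i * (M i j).re)
  simp only [diagRect]
  split_ifs <;> simp

theorem frobInner_diagRect_diagRect (g s : ℕ → ℝ) :
    frobInner (diagRect m n g) (diagRect m n s) = ∑ k : Fin (min m n), g k * s k := by
  simp [frobInner_diagRect_left, rectDiag, diagRect]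

theorem diagRect_sub (f g : ℕ → ℝ) :
    diagRect m n f - diagRect m n g = diagRect m n (f - g) := by
  ext i j
  simp only [Matrix.sub_apply, diagRect]
  split_ifs <;> simp

theorem conjTranspose_diagRect_mul_diagRect (s : ℕ → ℝ) :
    (diagRect m n s)ᴴ * diagRect m n s
      = diagonal fun j : Fin n => ((if (j : ℕ) < m then s j ^ 2 else 0 : ℝ) : ℂ) := by
  ext j l
  rw [mul_apply]
  by_cases hjl : j = l
  · subst hjl
    have h (i : Fin m) : star (diagRect m n s i j) * diagRect m n s i j
        = if (i : ℕ) = j then ((s j ^ 2 : ℝ) : ℂ) else 0 := by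
      simp only [diagRect]
      split_ifs with hij <;> simp [hij, sq]
    simp only [conjTranspose_apply, h, diagonal_apply_eq]
    rw [Fin.sum_univ_eq_sum_range (fun i => if i = (j : ℕ) then ((s j ^ 2 : ℝ) : ℂ) else 0),
      Finset.sum_ite_eq']
    split_ifs <;> simp_all
  · rw [diagonal_apply_ne _ hjl]
    refine Finset.sum_eq_zero fun i _ => ?_
    simp only [conjTranspose_apply, diagRect]
    split_ifs with hij hil
    · exact absurd (Fin.ext (hij.symm.trans hil)) hjl
    all_goals simp

end RectangularDiagonal

section NuclearNorm

variable {m n : ℕ}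

theorem nuclearNorm_unitary_mul_diagRect_mul {U : Matrix (Fin m) (Fin m) ℂ}
    {V : Matrix (Fin n) (Fin n) ℂ} (hU : U ∈ unitaryGroup (Fin m) ℂ)
    (hV : V ∈ unitaryGroup (Fin n) ℂ) (s : ℕ → ℝ) :
    nuclearNorm (U * diagRect m n s * Vᴴ) = ∑ k : Fin (min m n), |s k| := by
  set D := diagRect m n s
  have hU' : Uᴴ * U = 1 := mem_unitaryGroup_iff'.mp hU
  have hgram : (U * D * Vᴴ)ᴴ * (U * D * Vᴴ)
      = V * diagonal (fun j : Fin n => ((if (j : ℕ) < m then s j ^ 2 else 0 : ℝ) : ℂ)) * Vᴴ := by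
    rw [← conjTranspose_diagRect_mul_diagRect, conjTranspose_mul, conjTranspose_mul,
      conjTranspose_conjTranspose]
    calc V * (Dᴴ * Uᴴ) * (U * D * Vᴴ) = V * (Dᴴ * (Uᴴ * U) * D) * Vᴴ := by
          simp only [Matrix.mul_assoc]
      _ = V * (Dᴴ * D) * Vᴴ := by rw [hU', Matrix.mul_one]
  set hY := isHermitian_conjTranspose_mul_self (U * D * Vᴴ)
  have heig := hY.map_eigenvalues_eq_of_unitary_conj hV
    (fun j : Fin n => if (j : ℕ) < m then s j ^ 2 else 0) hgram
  calc nuclearNorm (U * D * Vᴴ) = ((Finset.univ.val.map hY.eigenvalues).map Real.sqrt).sum := by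
        rw [Multiset.map_map]; rfl
    _ = ∑ j : Fin n, if (j : ℕ) < m then |s j| else 0 := by
        rw [heig, Multiset.map_map, ← Finset.sum_eq_multiset_sum]
        refine Finset.sum_congr rfl fun j _ => ?_
        simp only [Function.comp_apply, apply_ite Real.sqrt, Real.sqrt_sq_eq_abs, Real.sqrt_zero]
    _ = ∑ k : Fin (min m n), |s k| := sum_ite_val_lt_eq_sum_fin_min fun k => |s k|

theorem sum_norm_rectDiag_le_nuclearNorm (W : Matrix (Fin m) (Fin n) ℂ)
    {P : Matrix (Fin m) (Fin m) ℂ} {Q : Matrix (Fin n) (Fin n) ℂ}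
    (hP : P ∈ unitaryGroup (Fin m) ℂ) (hQ : Q ∈ unitaryGroup (Fin n) ℂ) :
    ∑ k, ‖rectDiag (P * W * Q) k‖ ≤ nuclearNorm W := by
  set hW := isHermitian_conjTranspose_mul_self W
  set R : Matrix (Fin n) (Fin n) ℂ := ↑hW.eigenvectorUnitary
  have hR : R ∈ unitaryGroup (Fin n) ℂ := hW.eigenvectorUnitary.2
  have hRR : R * Rᴴ = 1 := mem_unitaryGroup_iff.mp hR
  set B := P * W * R
  set C := Rᴴ * Q
  have hPWQ : P * W * Q = B * C := by
    rw [show B * C = P * W * (R * Rᴴ) * Q by simp only [B, C, Matrix.mul_assoc],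
      hRR, Matrix.mul_one]
  have hgram : Bᴴ * B = diagonal (RCLike.ofReal ∘ hW.eigenvalues) := by
    have hPP : Pᴴ * P = 1 := mem_unitaryGroup_iff'.mp hP
    rw [← hW.conjStarAlgAut_star_eigenvectorUnitary, Unitary.conjStarAlgAut_apply,
      Unitary.coe_star, star_star, star_eq_conjTranspose]
    calc Bᴴ * B = Rᴴ * Wᴴ * (Pᴴ * P) * W * R := by
          simp only [B, conjTranspose_mul, Matrix.mul_assoc]
      _ = Rᴴ * (Wᴴ * W) * R := by rw [hPP, Matrix.mul_one]; simp only [Matrix.mul_assoc]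
  have hB (k : Fin n) : ∑ i, ‖B i k‖ ^ 2 = hW.eigenvalues k := by
    rw [sum_norm_sq_apply_eq_re_conjTranspose_mul_self_apply, hgram]
    simp
  have hC (k : Fin n) : ∑ j, ‖C k j‖ ^ 2 = 1 :=
    sum_norm_sq_apply_eq_one_of_mem_unitaryGroup (Submonoid.mul_mem _ (Unitary.star_mem hR) hQ) k
  calc ∑ d, ‖rectDiag (P * W * Q) d‖
      ≤ ∑ d : Fin (min m n), ∑ k, ‖B (Fin.castLEEmb (min_le_left m n) d) k‖
          * ‖C k (Fin.castLEEmb (min_le_right m n) d)‖ := by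
        refine Finset.sum_le_sum fun d _ => ?_
        rw [hPWQ, rectDiag, mul_apply]
        exact (norm_sum_le _ _).trans (Finset.sum_le_sum fun k _ => (norm_mul _ _).le)
    _ = ∑ k, ∑ d : Fin (min m n), ‖B (Fin.castLEEmb (min_le_left m n) d) k‖
          * ‖C k (Fin.castLEEmb (min_le_right m n) d)‖ := Finset.sum_comm
    _ ≤ ∑ k, √(hW.eigenvalues k) * √1 := by
        refine Finset.sum_le_sum fun k _ => ?_
        rw [← hB k, ← hC k]
        exact sum_mul_embedding_le_sqrt_mul_sqrt _ _ (fun i => ‖B i k‖) (fun j => ‖C k j‖)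
    _ = nuclearNorm W := by simp [nuclearNorm]

theorem frobInner_unitary_mul_diagRect_mul_le {U : Matrix (Fin m) (Fin m) ℂ}
    {V : Matrix (Fin n) (Fin n) ℂ} (hU : U ∈ unitaryGroup (Fin m) ℂ)
    (hV : V ∈ unitaryGroup (Fin n) ℂ) {α : ℝ} {g : ℕ → ℝ} (hg : ∀ k, |g k| ≤ α)
    (W : Matrix (Fin m) (Fin n) ℂ) :
    frobInner (U * diagRect m n g * Vᴴ) W ≤ α * nuclearNorm W := by
  have hα : 0 ≤ α := (abs_nonneg _).trans (hg 0)
  set M := Uᴴ * W * V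
  rw [frobInner_mul_mul_conjTranspose_left, frobInner_diagRect_left]
  calc ∑ k : Fin (min m n), g k * (rectDiag M k).re
      ≤ ∑ k, α * ‖rectDiag M k‖ := by
        refine Finset.sum_le_sum fun k _ => (le_abs_self _).trans ?_
        rw [abs_mul]
        exact mul_le_mul (hg k) (Complex.abs_re_le_norm _) (abs_nonneg _) hα
    _ = α * ∑ k, ‖rectDiag M k‖ := (Finset.mul_sum _ _ _).symm
    _ ≤ α * nuclearNorm W :=
        mul_le_mul_of_nonneg_left (sum_norm_rectDiag_le_nuclearNorm W (Unitary.star_mem hU) hV) hα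

end NuclearNorm

theorem matrix_softThresh_prox_general (m n : ℕ) (α : ℝ) (hα : 0 ≤ α)
    (X : Matrix (Fin m) (Fin n) ℂ)
    (U : Matrix (Fin m) (Fin m) ℂ) (V : Matrix (Fin n) (Fin n) ℂ)
    (hU : U ∈ Matrix.unitaryGroup (Fin m) ℂ) (hV : V ∈ Matrix.unitaryGroup (Fin n) ℂ)
    (f : ℕ → ℝ)
    (hSVD : X = U * diagRect m n f * Vᴴ) :
    ∀ W : Matrix (Fin m) (Fin n) ℂ,
      α * nuclearNorm (U * diagRect m n (fun k => softThresh α (f k)) * Vᴴ)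
          + (1/2) * frobNormSq (X - U * diagRect m n (fun k => softThresh α (f k)) * Vᴴ)
        ≤ α * nuclearNorm W + (1/2) * frobNormSq (X - W) := by
  intro W
  set s : ℕ → ℝ := fun k => softThresh α (f k)
  set Y := U * diagRect m n s * Vᴴ
  have hres : X - Y = U * diagRect m n (f - s) * Vᴴ := by
    rw [hSVD, ← diagRect_sub, Matrix.mul_sub, Matrix.sub_mul]
  have hresY : frobInner (X - Y) Y = α * nuclearNorm Y := by
    rw [hres, frobInner_unitary_conj hU hV, frobInner_diagRect_diagRect,
      nuclearNorm_unitary_mul_diagRect_mul hU hV, Finset.mul_sum]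
    exact Finset.sum_congr rfl fun k _ => sub_softThresh_mul_softThresh hα (f k)
  have hresW : frobInner (X - Y) W ≤ α * nuclearNorm W := by
    rw [hres]
    exact frobInner_unitary_mul_diagRect_mul_le hU hV (fun k => abs_sub_softThresh_le hα (f k)) W
  have hexpand : frobNormSq (X - W)
      = frobNormSq (X - Y) + 2 * frobInner (X - Y) (Y - W) + frobNormSq (Y - W) := by
    rw [← frobNormSq_add, sub_add_sub_cancel]
  rw [hexpand, frobInner_sub_right]
  linarith [frobNormSq_nonneg (Y - W)]

/-- **Soft thresholding of singular values solves the nuclear-norm proximity problem.**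
If `X = U Σ Vᴴ` is a singular value decomposition of `X` (with `σ` the nonincreasing
singular values of `X`), then `S_α(X) = U diag(s_α(σ_i)) Vᴴ` minimizes
`V ↦ α‖V‖_* + (1/2)‖X - V‖_F²`. -/
theorem matrix_softThresh_prox (m n : ℕ) (α : ℝ) (hα : 0 ≤ α)
    (X : Matrix (Fin m) (Fin n) ℂ)
    (U : Matrix (Fin m) (Fin m) ℂ) (V : Matrix (Fin n) (Fin n) ℂ)
    (hU : U ∈ Matrix.unitaryGroup (Fin m) ℂ) (hV : V ∈ Matrix.unitaryGroup (Fin n) ℂ)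
    (σ : Fin (min m n) → ℝ) (hσanti : Antitone σ) (hσ0 : ∀ i, 0 ≤ σ i)
    (f : ℕ → ℝ) (hf : ∀ k : ℕ, f k = if h : k < min m n then σ ⟨k, h⟩ else 0)
    (hsing : ∃ e : Equiv.Perm (Fin n), ∀ j : Fin n,
      f (j : ℕ) = Real.sqrt ((Matrix.isHermitian_conjTranspose_mul_self X).eigenvalues (e j)))
    (hSVD : X = U * diagRect m n f * Vᴴ) :
    ∀ W : Matrix (Fin m) (Fin n) ℂ,
      α * nuclearNorm (U * diagRect m n (fun k => softThresh α (f k)) * Vᴴ)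
          + (1/2) * frobNormSq (X - U * diagRect m n (fun k => softThresh α (f k)) * Vᴴ)
        ≤ α * nuclearNorm W + (1/2) * frobNormSq (X - W) :=
  matrix_softThresh_prox_general m n α hα X U V hU hV f hSVD
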